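/- arXiv:1012.4266 — 4 statements merged into one kernel-verified Lean document; each statement's English description precedes it below -/
import Mathlib

section
/- Let κ > 0 and for each natural number ℓ define the matrix T_ℓ(κ) by entries (T_ℓ(κ))_{m,n} = (1+κ²)^{-1/2} (1+κ²)^{-n/2} (1+κ^{-2})^{-(ℓ-n)/2} √C(ℓ,n) if m = ℓ - n with 0 ≤ n ≤ ℓ, and 0 otherwise. Then the adjoint (conjugate transpose) satisfies T_ℓ(κ)† = κ^{-1} · T_ℓ(κ^{-1}) for every ℓ. -/
/-- Kraus operators of the quantum-limited phase conjugation channel `D(κ)`: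
entries of the infinite matrix `T_ℓ(κ)` in the Fock basis. -/
noncomputable def Tmat (κ : ℝ) (ℓ m n : ℕ) : ℝ :=
  if n ≤ ℓ ∧ m = ℓ - n then
    (Real.sqrt (1 + κ ^ 2))⁻¹ * ((Real.sqrt (1 + κ ^ 2))⁻¹) ^ n *
      ((Real.sqrt (1 + (κ⁻¹) ^ 2))⁻¹) ^ (ℓ - n) * Real.sqrt (ℓ.choose n)
  else 0

lemma Real.sqrt_one_add_sq_eq_mul_sqrt_one_add_inv_sq {κ : ℝ} (hκ : 0 < κ) :
    √(1 + κ ^ 2) = κ * √(1 + κ⁻¹ ^ 2) := by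
  rw [← Real.sqrt_sq hκ.le, ← Real.sqrt_mul (sq_nonneg κ), Real.sqrt_sq hκ.le, mul_add,
    mul_one, ← mul_pow, mul_inv_cancel₀ hκ.ne', one_pow, add_comm]

lemma Tmat_eq_ite_add_eq (κ : ℝ) (ℓ m n : ℕ) :
    Tmat κ ℓ m n =
      if m + n = ℓ then
        (√(1 + κ ^ 2))⁻¹ * (√(1 + κ ^ 2))⁻¹ ^ n * (√(1 + κ⁻¹ ^ 2))⁻¹ ^ m *
          √((m + n).choose n)
      else 0 := by
  unfold Tmat
  by_cases h : m + n = ℓ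
  · subst h
    rw [if_pos ⟨Nat.le_add_left n m, (Nat.add_sub_cancel m n).symm⟩, if_pos rfl,
      Nat.add_sub_cancel]
  · rw [if_neg (by omega), if_neg h]

/-- Duality of the phase conjugation channels: the adjoint (conjugate transpose; the
entries are real so this is the transpose) satisfies `T_ℓ(κ)† = κ⁻¹ • T_ℓ(κ⁻¹)`. -/
theorem stmt_4 (κ : ℝ) (hκ : 0 < κ) (ℓ m n : ℕ) :
    Tmat κ ℓ n m = κ⁻¹ * Tmat κ⁻¹ ℓ m n := by
  rw [Tmat_eq_ite_add_eq, Tmat_eq_ite_add_eq, add_comm n m, inv_inv]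
  split_ifs
  · rw [Nat.choose_symm_add, Real.sqrt_one_add_sq_eq_mul_sqrt_one_add_inv_sq hκ, mul_inv]
    ring
  · rw [mul_zero]
end

section
/- For natural numbers n ≥ 1 and δ ≥ 0, the n × n matrix H with entries H_{ij} = (i + j + δ)! for 0 ≤ i, j ≤ n-1 is invertible; indeed det H = ∏_{k=0}^{n-1} k! · (k+δ)!. -/
open Finset

/-
Subtracting `(j + δ)` times column `j - 1` from column `j` (for `j = n, …, 1`) turns the entries
into `(i+j+δ)! - (j+δ)(i+j+δ-1)! = i · (i+j+δ-1)!`, so row `0` becomes `(δ!, 0, …, 0)`. Expanding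
along it and pulling the factor `i + 1` out of each remaining row gives
`det H(n+1, δ) = δ! · n! · det H(n, δ+1)`, and the product formula follows by induction on `n`.
-/

open Matrix Nat

variable (R : Type*) [CommRing R]

def factorialHankel (n δ : ℕ) : Matrix (Fin n) (Fin n) R :=
  of fun i j => ((i + j + δ : ℕ)! : R)

def factorialHankelReduced (n δ : ℕ) : Matrix (Fin (n + 1)) (Fin (n + 1)) R :=
  of fun i j => Fin.cases ((i + δ : ℕ)! : R) (fun j : Fin n => (i : R) * ((i + j + δ : ℕ)! : R)) j

theorem det_factorialHankel_eq_det_reduced (n δ : ℕ) :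
    (factorialHankel R (n + 1) δ).det = (factorialHankelReduced R n δ).det := by
  refine det_eq_of_forall_col_eq_smul_add_pred (c := fun j : Fin n => ((j + 1 + δ : ℕ) : R))
    (fun i => by simp [factorialHankel, factorialHankelReduced]) fun i j => ?_
  have hsucc : (i : ℕ) + (j + 1) + δ = (i + j + δ) + 1 := by omega
  simp only [factorialHankel, factorialHankelReduced, of_apply, Fin.cases_succ, Fin.val_succ,
    Fin.val_castSucc, hsucc, factorial_succ]
  push_cast
  ring

theorem det_factorialHankelReduced (n δ : ℕ) :
    (factorialHankelReduced R n δ).det = (δ ! * n ! : R) * (factorialHankel R n (δ + 1)).det := by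
  have hsub : (factorialHankelReduced R n δ).submatrix Fin.succ Fin.succ =
      of fun i j : Fin n => ((i + 1 : ℕ) : R) * factorialHankel R n (δ + 1) i j := by
    ext i j
    simp only [factorialHankelReduced, factorialHankel, submatrix_apply, of_apply, Fin.cases_succ,
      Fin.val_succ]
    rw [show (i : ℕ) + 1 + j + δ = i + j + (δ + 1) by omega]
  rw [det_succ_row_zero, Fin.sum_univ_succ, Fin.succAbove_zero, hsub, det_mul_column]
  simp only [factorialHankelReduced, of_apply, Fin.cases_zero, Fin.cases_succ, Fin.val_zero,
    Nat.cast_zero, zero_mul, mul_zero, Finset.sum_const_zero, add_zero, pow_zero, one_mul, zero_add]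
  rw [Fin.prod_univ_eq_prod_range (fun k => ((k + 1 : ℕ) : R)), ← Nat.cast_prod,
    prod_range_add_one_eq_factorial]
  ring

theorem det_factorialHankel (n δ : ℕ) :
    (factorialHankel R n δ).det = ∏ k ∈ range n, (k ! : R) * ((k + δ)! : R) := by
  induction n generalizing δ with
  | zero => simp [factorialHankel]
  | succ n ih =>
    rw [det_factorialHankel_eq_det_reduced, det_factorialHankelReduced, ih, prod_mul_distrib,
      prod_mul_distrib, prod_range_succ (fun k => (k ! : R)),
      prod_range_succ' (fun k => ((k + δ)! : R))]
    simp only [zero_add, add_assoc, add_comm 1 δ]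
    ring

theorem stmt_13_general (n δ : ℕ) :
    (Matrix.of fun i j : Fin n => ((((i : ℕ) + (j : ℕ) + δ).factorial : ℝ))).det =
        (∏ k ∈ Finset.range n, (k.factorial : ℝ) * ((k + δ).factorial : ℝ)) ∧
      IsUnit (Matrix.of fun i j : Fin n => ((((i : ℕ) + (j : ℕ) + δ).factorial : ℝ))) := by
  have hdet : (of fun i j : Fin n => (((i : ℕ) + j + δ)! : ℝ)).det = _ :=
    det_factorialHankel ℝ n δ
  refine ⟨hdet, ?_⟩
  rw [isUnit_iff_isUnit_det, hdet, isUnit_iff_ne_zero, prod_ne_zero_iff]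
  intro k _
  positivity

/-- The Hankel matrix of factorials `H_{ij} = (i+j+δ)!`, `0 ≤ i,j ≤ n-1`, is invertible,
with `det H = ∏_{k=0}^{n-1} k! (k+δ)!`. -/
theorem stmt_13 (n δ : ℕ) (hn : 1 ≤ n) :
    (Matrix.of fun i j : Fin n => ((((i : ℕ) + (j : ℕ) + δ).factorial : ℝ))).det =
        (∏ k ∈ Finset.range n, (k.factorial : ℝ) * ((k + δ).factorial : ℝ)) ∧
      IsUnit (Matrix.of fun i j : Fin n => ((((i : ℕ) + (j : ℕ) + δ).factorial : ℝ))) :=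
  stmt_13_general n δ
end

section
/- Let 0 < κ < 1 and for each natural number ℓ let B_ℓ(κ) be the infinite matrix (indexed by ℕ × ℕ) with entries (B_ℓ(κ))_{m,n} = √C(m+ℓ, ℓ) (√(1-κ²))^ℓ κ^m if n = m + ℓ and 0 otherwise. Then every nonzero finite linear combination M = ∑_ℓ c_ℓ B_ℓ(κ) (with complex coefficients c_ℓ, not all zero) has infinite rank; in particular no nonzero element of the linear span of {B_ℓ(κ)} has finite rank. -/
/-!
Order the Fock basis and pick the smallest `ℓ₀` with `c ℓ₀ ≠ 0`. Since `B_ℓ(κ)` lives on the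
`ℓ`-th superdiagonal, `M e_{n+ℓ₀}` vanishes in every coordinate above `n` (those would come from
some `B_ℓ` with `ℓ < ℓ₀`) and its `n`-th coordinate is `c ℓ₀` times a nonzero entry of `B_ℓ₀(κ)`.
So the vectors `M e_{n+ℓ₀}`, `n ∈ ℕ`, form a triangular, hence linearly independent, family in
the range of `M`.
-/

/-- Entries (in the Fock basis, cast into `ℂ`) of the Kraus operators `B_ℓ(κ)` of the
quantum-limited attenuator channel. -/
noncomputable def Bent (κ : ℝ) (ℓ m n : ℕ) : ℂ :=
  if n = m + ℓ then
    ((Real.sqrt ((m + ℓ).choose ℓ) * (Real.sqrt (1 - κ ^ 2)) ^ ℓ * κ ^ m : ℝ) : ℂ)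
  else 0

/-- `B_ℓ(κ)` as a linear operator from finitely supported sequences to sequences. -/
noncomputable def Bop (κ : ℝ) (ℓ : ℕ) : (ℕ →₀ ℂ) →ₗ[ℂ] (ℕ → ℂ) :=
  Finsupp.lsum ℂ fun n => LinearMap.toSpanSingleton ℂ (ℕ → ℂ) (fun m => Bent κ ℓ m n)

theorem linearIndependent_of_triangular {ι R : Type*} [LinearOrder ι] [Ring R] [NoZeroDivisors R]
    {v : ι → ι → R} (hdiag : ∀ i, v i i ≠ 0) (hzero : ∀ i j, i < j → v i j = 0) :
    LinearIndependent R v := by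
  rw [linearIndependent_iff']
  intro t g
  induction t using Finset.induction_on_max with
  | empty => simp
  | insert a t hlt ih =>
    intro hsum
    have hat : a ∉ t := fun h => lt_irrefl a (hlt a h)
    have hga : g a = 0 := by
      have hcoord := congrFun hsum a
      simp only [Finset.sum_apply, Pi.smul_apply, smul_eq_mul, Pi.zero_apply,
        Finset.sum_insert hat] at hcoord
      rw [Finset.sum_eq_zero fun i hi => by rw [hzero i a (hlt i hi), mul_zero], add_zero]
        at hcoord
      exact (mul_eq_zero.mp hcoord).resolve_right (hdiag a)
    intro i hi
    rcases Finset.mem_insert.mp hi with rfl | hi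
    · exact hga
    · refine ih ?_ i hi
      rwa [Finset.sum_insert hat, hga, zero_smul, zero_add] at hsum

theorem aleph0_le_rank_range_of_triangular {K V : Type*} [Field K] [AddCommGroup V] [Module K V]
    (f : V →ₗ[K] ℕ → K) (x : ℕ → V) (hdiag : ∀ n, f (x n) n ≠ 0)
    (hzero : ∀ n m, n < m → f (x n) m = 0) :
    Cardinal.aleph0 ≤ Module.rank K (LinearMap.range f) := by
  let w : ℕ → LinearMap.range f := fun n => ⟨f (x n), x n, rfl⟩
  have hw : LinearIndependent K w :=
    LinearIndependent.of_comp (LinearMap.range f).subtype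
      (linearIndependent_of_triangular (v := fun n => f (x n)) hdiag hzero)
  exact hw.aleph0_le_rank

theorem Bent_of_ne {κ : ℝ} {ℓ m n : ℕ} (h : n ≠ m + ℓ) : Bent κ ℓ m n = 0 :=
  if_neg h

theorem Bent_superdiag_ne_zero {κ : ℝ} (hκ0 : κ ≠ 0) (hκ1 : κ ^ 2 < 1) (ℓ m : ℕ) :
    Bent κ ℓ m (m + ℓ) ≠ 0 := by
  rw [Bent, if_pos rfl, Complex.ofReal_ne_zero]
  have hchoose : (0 : ℝ) < (m + ℓ).choose ℓ := mod_cast Nat.choose_pos (Nat.le_add_left ℓ m)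
  have hsqrt : 0 < Real.sqrt (1 - κ ^ 2) := Real.sqrt_pos.mpr (by linarith)
  exact mul_ne_zero (mul_ne_zero (Real.sqrt_pos.mpr hchoose).ne' (pow_ne_zero ℓ hsqrt.ne'))
    (pow_ne_zero m hκ0)

theorem sum_smul_Bop_single_apply (κ : ℝ) (s : Finset ℕ) (c : ℕ → ℂ) (n m : ℕ) :
    (∑ ℓ ∈ s, c ℓ • Bop κ ℓ) (Finsupp.single n 1) m = ∑ ℓ ∈ s, c ℓ * Bent κ ℓ m n := by
  simp [Bop, LinearMap.sum_apply, Finsupp.lsum_single, LinearMap.toSpanSingleton_apply]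

/-- No nonzero finite linear combination of attenuator Kraus operators has finite rank:
any `M = ∑ c_ℓ B_ℓ(κ)` with some `c_ℓ ≠ 0` has infinite rank. -/
theorem stmt_14 (κ : ℝ) (hκ0 : 0 < κ) (hκ1 : κ < 1) (s : Finset ℕ) (c : ℕ → ℂ)
    (hc : ∃ ℓ ∈ s, c ℓ ≠ 0) :
    Cardinal.aleph0 ≤ Module.rank ℂ (LinearMap.range (∑ ℓ ∈ s, c ℓ • Bop κ ℓ)) := by
  obtain ⟨ℓ₀, ⟨hℓ₀s, hc₀⟩, hmin⟩ := wellFounded_lt.has_min {ℓ | ℓ ∈ s ∧ c ℓ ≠ 0} hc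
  have hsq : κ ^ 2 < 1 := by nlinarith
  refine aleph0_le_rank_range_of_triangular _ (fun n => Finsupp.single (n + ℓ₀) 1) ?_ ?_
  · intro n
    rw [sum_smul_Bop_single_apply, Finset.sum_eq_single_of_mem ℓ₀ hℓ₀s
      fun ℓ _ hne => by rw [Bent_of_ne (by omega), mul_zero]]
    exact mul_ne_zero hc₀ (Bent_superdiag_ne_zero hκ0.ne' hsq ℓ₀ n)
  · intro n m hnm
    rw [sum_smul_Bop_single_apply]
    refine Finset.sum_eq_zero fun ℓ hℓ => ?_
    by_cases hdiag : n + ℓ₀ = m + ℓ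
    · have hcℓ : c ℓ = 0 := not_not.mp fun hcℓ => hmin ℓ ⟨hℓ, hcℓ⟩ (by omega)
      rw [hcℓ, zero_mul]
    · rw [Bent_of_ne hdiag, mul_zero]
end

section
/- For natural numbers m, ℓ, δ and real η > 0, the integral ∫₀^∞ e^{-(η²+1)t} t^δ L_m^δ(η² t) L_ℓ^δ(t) dt equals ((m+ℓ+δ)! / (m! ℓ!)) · η^{2ℓ} / (η²+1)^{m+ℓ+δ+1}, where L_k^δ denotes the associated Laguerre polynomial. -/
open MeasureTheory

/-- The associated (generalized) Laguerre polynomial `L_n^δ(x)`. -/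
noncomputable def lag (n δ : ℕ) (x : ℝ) : ℝ :=
  ∑ i ∈ Finset.range (n + 1),
    (-1 : ℝ) ^ i * ((n + δ).choose (n - i) : ℝ) * x ^ i / (i.factorial : ℝ)

/-!
Substituting `x = (η² + 1) t` turns the integral into `∫₀^∞ e^{-x} x^δ L_m^δ(p x) L_ℓ^δ(q x) dx`
with `p = η²/(η² + 1)`, `q = 1/(η² + 1)`, so `p + q = 1`. The multiplication theorem
`L_n^δ(c x) = ∑_k C(n+δ, n-k) c^k (1-c)^(n-k) L_k^δ(x)` expands both factors in the Laguerre basis,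
with coefficients built from `p` and `1 - p = q` (resp. `q` and `1 - q = p`). Orthogonality for the
weight `e^{-x} x^δ` keeps only the diagonal terms, each contributing the same monomial `p^ℓ q^m`,
and the remaining sum of binomial coefficients is a Vandermonde convolution.
-/

open Finset Real

theorem Nat.add_choose_sub_mul_add_choose_sub {n k i : ℕ} (δ : ℕ) (hik : i ≤ k) (hkn : k ≤ n) :
    (n + δ).choose (n - k) * (k + δ).choose (k - i)
      = (n + δ).choose (n - i) * (n - i).choose (k - i) := by
  rw [← Nat.choose_symm_of_eq_add (show n + δ = k + δ + (n - k) by omega),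
    ← Nat.choose_symm_of_eq_add (show k + δ = i + δ + (k - i) by omega),
    ← Nat.choose_symm_of_eq_add (show n + δ = i + δ + (n - i) by omega),
    Nat.choose_mul (by omega), show n + δ - (i + δ) = n - i by omega,
    show k + δ - (i + δ) = k - i by omega]

theorem Ring.choose_neg_natCast_add_one (N r : ℕ) :
    Ring.choose (-((N + 1 : ℕ) : ℤ)) r = (-1) ^ r * (N + r).choose r := by
  rw [Ring.choose_neg, Units.smul_def, Int.negOnePow_def, smul_eq_mul,
    show ((N + 1 : ℕ) : ℤ) + r - 1 = ((N + r : ℕ) : ℤ) by push_cast; ring, Ring.choose_natCast]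
  rfl

/-- Chu–Vandermonde for the upper indices `-(δ + i + 1)` and `j + δ`, whose sum is `j - i - 1`. -/
theorem sum_range_neg_one_pow_mul_choose_mul_choose (δ i j : ℕ) :
    ∑ r ∈ range (j + 1), (-1 : ℤ) ^ r * (j + δ).choose (j - r) * (δ + i + r).choose r
      = (-1) ^ j * i.choose j := by
  have vandermonde := Ring.add_choose_eq (r := -((δ + i + 1 : ℕ) : ℤ)) (s := ((j + δ : ℕ) : ℤ)) j
    (Commute.all _ _)
  simp only [Finset.Nat.sum_antidiagonal_eq_sum_range_succ_mk, Ring.choose_neg_natCast_add_one,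
    Ring.choose_natCast] at vandermonde
  rw [show ∑ r ∈ range (j + 1), (-1 : ℤ) ^ r * (j + δ).choose (j - r) * (δ + i + r).choose r
      = Ring.choose (-((δ + i + 1 : ℕ) : ℤ) + ((j + δ : ℕ) : ℤ)) j by
    rw [vandermonde]; exact sum_congr rfl fun r _ => by ring]
  rcases lt_or_ge i j with hij | hji
  · rw [show -((δ + i + 1 : ℕ) : ℤ) + ((j + δ : ℕ) : ℤ) = ((j - i - 1 : ℕ) : ℤ) by omega,
      Ring.choose_natCast, Nat.choose_eq_zero_of_lt (by omega), Nat.choose_eq_zero_of_lt hij]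
    simp
  · rw [show -((δ + i + 1 : ℕ) : ℤ) + ((j + δ : ℕ) : ℤ) = -((i - j + 1 : ℕ) : ℤ) by omega,
      Ring.choose_neg_natCast_add_one, Nat.sub_add_cancel hji]

theorem add_choose_sub_mul_factorial_div_factorial {m j : ℕ} (δ : ℕ) (hjm : j ≤ m) :
    ((m + δ).choose (m - j) : ℝ) * ((j + δ).factorial / j.factorial)
      = (m + δ).factorial / m.factorial * m.choose j := by
  rw [Nat.cast_choose ℝ (by omega), Nat.cast_choose ℝ hjm, show m + δ - (m - j) = j + δ by omega]
  field_simp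

theorem sum_range_choose_mul_add_choose_sub (m ℓ δ : ℕ) :
    ∑ j ∈ range (ℓ + 1), (m.choose j * (ℓ + δ).choose (ℓ - j) : ℝ) = (m + ℓ + δ).choose ℓ := by
  rw [add_assoc, Nat.add_choose_eq, Finset.Nat.sum_antidiagonal_eq_sum_range_succ_mk]
  push_cast
  rfl

theorem sum_Ico_add_choose_mul_add_choose_mul_pow {R : Type*} [CommRing R] {n i : ℕ} (δ : ℕ)
    (hin : i ≤ n) (c : R) :
    ∑ k ∈ Ico i (n + 1),
        ((n + δ).choose (n - k) * (k + δ).choose (k - i) : R) * c ^ k * (1 - c) ^ (n - k)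
      = (n + δ).choose (n - i) * c ^ i :=
  calc _ = ∑ r ∈ range (n - i + 1),
        (n + δ).choose (n - i) * c ^ i * (c ^ r * (1 - c) ^ (n - i - r) * (n - i).choose r) := by
        rw [sum_Ico_eq_sum_range, show n + 1 - i = n - i + 1 by omega]
        refine sum_congr rfl fun r hr => ?_
        have hr : r ≤ n - i := Nat.lt_succ_iff.mp (mem_range.mp hr)
        rw [← Nat.cast_mul, Nat.add_choose_sub_mul_add_choose_sub δ (by omega) (by omega),
          show i + r - i = r by omega, show n - (i + r) = n - i - r by omega, pow_add]
        push_cast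
        ring
    _ = (n + δ).choose (n - i) * c ^ i * (c + (1 - c)) ^ (n - i) := by rw [add_pow, mul_sum]
    _ = (n + δ).choose (n - i) * c ^ i := by rw [add_sub_cancel, one_pow, mul_one]

theorem lag_mul (n δ : ℕ) (c x : ℝ) :
    lag n δ (c * x)
      = ∑ k ∈ range (n + 1),
          ((n + δ).choose (n - k) : ℝ) * c ^ k * (1 - c) ^ (n - k) * lag k δ x := by
  simp only [lag, mul_sum, range_eq_Ico]
  rw [← sum_Ico_Ico_comm 0 (n + 1) fun i k => ((n + δ).choose (n - k) : ℝ) * c ^ k *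
    (1 - c) ^ (n - k) * ((-1) ^ i * ((k + δ).choose (k - i) : ℝ) * x ^ i / i.factorial)]
  refine sum_congr rfl fun i hi => ?_
  have hin : i ≤ n := Nat.lt_succ_iff.mp (mem_Ico.mp hi).2
  calc _ = ((n + δ).choose (n - i) * c ^ i) * ((-1) ^ i * x ^ i / i.factorial) := by ring
    _ = _ := by
      rw [← sum_Ico_add_choose_mul_add_choose_mul_pow δ hin, sum_mul]
      exact sum_congr rfl fun k _ => by ring

theorem lag_mul_eq_sum (n δ : ℕ) (x y : ℝ) :
    lag n δ x * y
      = ∑ i ∈ range (n + 1),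
          (-1) ^ i * ((n + δ).choose (n - i) : ℝ) / i.factorial * (x ^ i * y) := by
  rw [lag, sum_mul]
  exact sum_congr rfl fun i _ => by ring

theorem integrableOn_exp_neg_mul_pow (n : ℕ) :
    IntegrableOn (fun x => exp (-x) * x ^ n) (Set.Ioi 0) := by
  simpa [Real.rpow_natCast] using GammaIntegral_convergent (s := n + 1) (by positivity)

theorem integral_exp_neg_mul_pow (n : ℕ) : ∫ x in Set.Ioi 0, exp (-x) * x ^ n = n.factorial := by
  simpa [Real.rpow_natCast, Gamma_nat_eq_factorial] using
    (Gamma_eq_integral (s := n + 1) (by positivity)).symm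

theorem exp_neg_mul_pow_mul_lag_eq_sum (n j δ : ℕ) :
    (fun x => exp (-x) * x ^ n * lag j δ x)
      = fun x => ∑ r ∈ range (j + 1),
          (-1) ^ r * ((j + δ).choose (j - r) : ℝ) / r.factorial * (exp (-x) * x ^ (n + r)) := by
  ext x
  rw [mul_comm, lag_mul_eq_sum]
  exact sum_congr rfl fun r _ => by ring

theorem integrableOn_exp_neg_mul_pow_mul_lag (n j δ : ℕ) :
    IntegrableOn (fun x => exp (-x) * x ^ n * lag j δ x) (Set.Ioi 0) := by
  rw [exp_neg_mul_pow_mul_lag_eq_sum]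
  exact integrable_finsetSum _ fun r _ => (integrableOn_exp_neg_mul_pow _).const_mul _

theorem integral_exp_neg_mul_pow_mul_lag (δ i j : ℕ) :
    ∫ x in Set.Ioi 0, exp (-x) * x ^ (δ + i) * lag j δ x
      = (-1) ^ j * (δ + i).factorial * i.choose j := by
  rw [exp_neg_mul_pow_mul_lag_eq_sum, integral_finsetSum _ fun r _ =>
    (integrableOn_exp_neg_mul_pow _).const_mul _]
  simp only [integral_const_mul, integral_exp_neg_mul_pow]
  have alternating : ∑ r ∈ range (j + 1),
      (-1) ^ r * ((j + δ).choose (j - r) : ℝ) * (δ + i + r).choose r = (-1) ^ j * i.choose j := by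
    exact_mod_cast sum_range_neg_one_pow_mul_choose_mul_choose δ i j
  rw [mul_right_comm, ← alternating, sum_mul]
  refine sum_congr rfl fun r _ => ?_
  rw [← Nat.add_choose_mul_factorial_mul_factorial (δ + i) r]
  push_cast
  field_simp

theorem exp_neg_mul_pow_mul_lag_mul_lag_eq_sum (δ k j : ℕ) :
    (fun x => exp (-x) * x ^ δ * lag k δ x * lag j δ x)
      = fun x => ∑ i ∈ range (k + 1), (-1) ^ i * ((k + δ).choose (k - i) : ℝ) / i.factorial *
          (exp (-x) * x ^ (δ + i) * lag j δ x) := by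
  ext x
  rw [mul_assoc, lag_mul_eq_sum, mul_sum]
  exact sum_congr rfl fun i _ => by ring

theorem integrableOn_exp_neg_mul_pow_mul_lag_mul_lag (δ k j : ℕ) :
    IntegrableOn (fun x => exp (-x) * x ^ δ * lag k δ x * lag j δ x) (Set.Ioi 0) := by
  rw [exp_neg_mul_pow_mul_lag_mul_lag_eq_sum]
  exact integrable_finsetSum _ fun i _ => (integrableOn_exp_neg_mul_pow_mul_lag _ _ _).const_mul _

theorem integral_exp_neg_mul_pow_mul_lag_mul_lag (δ k j : ℕ) :
    ∫ x in Set.Ioi 0, exp (-x) * x ^ δ * lag k δ x * lag j δ x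
      = if k = j then ((k + δ).factorial / k.factorial : ℝ) else 0 := by
  wlog hkj : k ≤ j generalizing k j
  · convert this j k (by omega) using 1
    · exact congrArg _ (funext fun x => by ring)
    · rw [if_neg (by omega), if_neg (by omega)]
  -- `L_j^δ` is orthogonal to `x^i` for `i < j`, so only the top term of `L_k^δ` can contribute.
  rw [exp_neg_mul_pow_mul_lag_mul_lag_eq_sum, integral_finsetSum _ fun i _ =>
    (integrableOn_exp_neg_mul_pow_mul_lag _ _ _).const_mul _]
  simp only [integral_const_mul, integral_exp_neg_mul_pow_mul_lag]
  rcases hkj.lt_or_eq with hlt | rfl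
  · rw [if_neg hlt.ne]
    refine sum_eq_zero fun i hi => ?_
    rw [Nat.choose_eq_zero_of_lt (n := i) (by grind)]
    simp
  · rw [if_pos rfl, sum_eq_single k (fun i hi hik => ?_) (by simp)]
    · rw [Nat.sub_self, Nat.choose_zero_right, Nat.choose_self, add_comm δ]
      field_simp
      simp [← pow_mul, pow_mul']
    · rw [Nat.choose_eq_zero_of_lt (n := i) (by grind)]
      simp

theorem integral_exp_neg_mul_pow_mul_lag_mul_lag_of_add_eq_one {p q : ℝ} (hpq : p + q = 1)
    (m ℓ δ : ℕ) :
    ∫ x in Set.Ioi 0, exp (-x) * x ^ δ * lag m δ (p * x) * lag ℓ δ (q * x)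
      = (m + ℓ + δ).factorial / (m.factorial * ℓ.factorial) * p ^ ℓ * q ^ m := by
  set A : ℕ → ℝ := fun k => (m + δ).choose (m - k) * p ^ k * q ^ (m - k)
  set B : ℕ → ℝ := fun j => (ℓ + δ).choose (ℓ - j) * q ^ j * p ^ (ℓ - j)
  have expand : (fun x => exp (-x) * x ^ δ * lag m δ (p * x) * lag ℓ δ (q * x))
      = fun x => ∑ j ∈ range (ℓ + 1), ∑ k ∈ range (m + 1),
          A k * B j * (exp (-x) * x ^ δ * lag k δ x * lag j δ x) := by
    ext x
    rw [mul_assoc, lag_mul, lag_mul, sum_mul_sum, ← eq_sub_of_add_eq hpq, ← eq_sub_of_add_eq' hpq]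
    simp only [mul_sum]
    rw [sum_comm]
    exact sum_congr rfl fun j _ => sum_congr rfl fun k _ => by ring
  have diagonal : ∀ j ∈ range (ℓ + 1), ∑ k ∈ range (m + 1),
      A k * B j * (if k = j then ((k + δ).factorial / k.factorial : ℝ) else 0)
        = (m + δ).factorial / m.factorial * (m.choose j * (ℓ + δ).choose (ℓ - j))
            * p ^ ℓ * q ^ m := by
    intro j hj
    have hjℓ : j ≤ ℓ := Nat.lt_succ_iff.mp (mem_range.mp hj)
    simp only [mul_ite, mul_zero, sum_ite_eq', mem_range]
    split_ifs with hjm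
    · replace hjm : j ≤ m := by omega
      calc A j * B j * ((j + δ).factorial / j.factorial)
          = ((m + δ).choose (m - j) * ((j + δ).factorial / j.factorial)) * (ℓ + δ).choose (ℓ - j)
              * (p ^ j * p ^ (ℓ - j)) * (q ^ (m - j) * q ^ j) := by ring
        _ = _ := by
          rw [add_choose_sub_mul_factorial_div_factorial δ hjm, pow_mul_pow_sub p hjℓ,
            pow_sub_mul_pow q hjm]
          ring
    · rw [Nat.choose_eq_zero_of_lt (n := m) (by omega)]
      simp
  rw [expand, integral_finsetSum _ fun j _ => integrable_finsetSum _ fun k _ =>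
    (integrableOn_exp_neg_mul_pow_mul_lag_mul_lag _ _ _).const_mul _]
  simp only [integral_finsetSum _ fun k _ =>
      (integrableOn_exp_neg_mul_pow_mul_lag_mul_lag _ _ _).const_mul _,
    integral_const_mul, integral_exp_neg_mul_pow_mul_lag_mul_lag]
  rw [sum_congr rfl diagonal, ← sum_mul, ← sum_mul, ← mul_sum, sum_range_choose_mul_add_choose_sub,
    Nat.cast_choose ℝ (by omega : ℓ ≤ m + ℓ + δ), show m + ℓ + δ - ℓ = m + δ by omega]
  field_simp

theorem integral_exp_neg_mul_pow_mul_lag_mul_lag_of_add_eq {a b c : ℝ} (ha : 0 < a)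
    (hbc : b + c = a) (m ℓ δ : ℕ) :
    ∫ t in Set.Ioi 0, exp (-(a * t)) * t ^ δ * lag m δ (b * t) * lag ℓ δ (c * t)
      = (m + ℓ + δ).factorial / (m.factorial * ℓ.factorial) * b ^ ℓ * c ^ m
          / a ^ (m + ℓ + δ + 1) := by
  have rescale := integral_comp_mul_left_Ioi
    (fun x => exp (-x) * x ^ δ * lag m δ (b / a * x) * lag ℓ δ (c / a * x)) 0 ha
  rw [mul_zero, integral_exp_neg_mul_pow_mul_lag_mul_lag_of_add_eq_one (by field_simp; exact hbc),
    smul_eq_mul] at rescale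
  calc _ = ∫ t in Set.Ioi 0, (a ^ δ)⁻¹ *
        (exp (-(a * t)) * (a * t) ^ δ * lag m δ (b / a * (a * t)) * lag ℓ δ (c / a * (a * t))) := by
        refine congrArg _ (funext fun t => ?_)
        rw [show b / a * (a * t) = b * t by field_simp, show c / a * (a * t) = c * t by field_simp,
          mul_pow]
        field_simp
    _ = _ := by
      rw [integral_const_mul, rescale, div_pow, div_pow]
      field_simp
      ring

theorem stmt_16_general (m ℓ δ : ℕ) (η : ℝ) :
    ∫ t in Set.Ioi (0 : ℝ),
        Real.exp (-((η ^ 2 + 1) * t)) * t ^ δ * lag m δ (η ^ 2 * t) * lag ℓ δ t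
      = ((m + ℓ + δ).factorial : ℝ) / ((m.factorial : ℝ) * (ℓ.factorial : ℝ)) *
          η ^ (2 * ℓ) / (η ^ 2 + 1) ^ (m + ℓ + δ + 1) := by
  simpa only [one_mul, one_pow, mul_one, pow_mul] using
    integral_exp_neg_mul_pow_mul_lag_mul_lag_of_add_eq (b := η ^ 2) (c := 1) (by positivity) rfl
      m ℓ δ

/-- Overlap integral between a Laguerre function and a scaled Laguerre function:
`∫₀^∞ e^{-(η²+1)t} t^δ L_m^δ(η²t) L_ℓ^δ(t) dt
  = ((m+ℓ+δ)!/(m! ℓ!)) η^{2ℓ} / (η²+1)^{m+ℓ+δ+1}`. -/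
theorem stmt_16 (m ℓ δ : ℕ) (η : ℝ) (hη : 0 < η) :
    ∫ t in Set.Ioi (0 : ℝ),
        Real.exp (-((η ^ 2 + 1) * t)) * t ^ δ * lag m δ (η ^ 2 * t) * lag ℓ δ t
      = ((m + ℓ + δ).factorial : ℝ) / ((m.factorial : ℝ) * (ℓ.factorial : ℝ)) *
          η ^ (2 * ℓ) / (η ^ 2 + 1) ^ (m + ℓ + δ + 1) :=
  stmt_16_general m ℓ δ η
end
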